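/- arXiv:2501.05827 — 2 statements merged into one kernel-verified Lean document; each statement's English description precedes it below -/
import Mathlib

section
/- For every a ≤ 2^n and every j ≤ n−1, m_j(I_a) ≤ m_{n−1}(I_a) = ⌊a/2⌋. -/
/-- The hypercube graph on `{0,1}^n`: two strings adjacent iff they differ in one coordinate. -/
def hypercube (n : ℕ) : SimpleGraph (Fin n → Bool) where
  Adj x y := (Finset.univ.filter (fun i => x i ≠ y i)).card = 1
  symm := by constructor; intro x y h; simpa [ne_comm] using h
  loopless := by constructor; intro x h; simp at h

/-- The integer represented by a string, position 0 most significant. -/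
def bval {n : ℕ} (x : Fin n → Bool) : ℕ :=
  ∑ i : Fin n, if x i then 2 ^ (n - 1 - i.val) else 0

/-- The initial segment of length `a` in the binary order on `{0,1}^n`. -/
def initSeg (n a : ℕ) : Finset (Fin n → Bool) :=
  Finset.univ.filter (fun x => bval x < a)

/-- `m_j(S)`: number of elements of `S` with a `1` in coordinate `j`. -/
def mCount {n : ℕ} (S : Finset (Fin n → Bool)) (j : Fin n) : ℕ :=
  (S.filter (fun x => x j = true)).card

/-- The hyperface `F_{j,k}` of strings whose `j`-th coordinate equals `k`. -/
def face (n : ℕ) (j : Fin n) (k : Bool) : Finset (Fin n → Bool) :=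
  Finset.univ.filter (fun x => x j = k)

/-!
Reading `x` as the binary numeral `bval x` identifies `I_a` with `{0, …, a - 1}`, coordinate `j`
becoming bit `n - 1 - j`. Subtracting `2 ^ b` maps the numbers below `a` with bit `b` set
injectively into those with bit `b` clear, so at most half of them have bit `b` set; for `b = 0`
they are the odd numbers below `a`, exactly `⌊a / 2⌋` of them.
-/

open Finset

namespace Nat

theorem two_mul_card_filter_range_testBit_le (a b : ℕ) :
    2 * #{m ∈ range a | m.testBit b} ≤ a := by
  have hset_le_clear : #{m ∈ range a | m.testBit b} ≤ #{m ∈ range a | ¬m.testBit b} := by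
    refine card_le_card_of_injOn (· - 2 ^ b) (fun m hm => ?_) (fun m hm m' hm' h => ?_)
    · obtain ⟨hma, hmb⟩ : m < a ∧ m.testBit b := by simpa using hm
      have hb := ge_two_pow_of_testBit hmb
      show m - 2 ^ b ∈ _
      refine mem_filter.2 ⟨mem_range.2 ((Nat.sub_le _ _).trans_lt hma), ?_⟩
      rw [← Nat.add_sub_cancel' hb, testBit_two_pow_add_eq] at hmb
      simpa using hmb
    · have := ge_two_pow_of_testBit (mem_filter.1 hm).2
      have := ge_two_pow_of_testBit (mem_filter.1 hm').2
      simp only at h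
      omega
  have hsplit := card_filter_add_card_filter_not (s := range a) (fun m => m.testBit b)
  rw [card_range] at hsplit
  omega

theorem card_filter_range_testBit_zero (a : ℕ) : #{m ∈ range a | m.testBit 0} = a / 2 := by
  induction a with
  | zero => rfl
  | succ a ih =>
    rw [range_add_one, filter_insert]
    split_ifs with h
    · rw [card_insert_of_notMem (by simp), ih]
      simp only [testBit_zero, decide_eq_true_eq] at h
      omega
    · rw [ih]
      simp only [testBit_zero, decide_eq_true_eq, mod_two_not_eq_one] at h
      omega

end Nat

def bvalEquiv (n : ℕ) : (Fin n → Bool) ≃ Fin (2 ^ n) :=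
  (Equiv.arrowCongr Fin.revPerm finTwoEquiv.symm).trans finFunctionFinEquiv

theorem val_finTwoEquiv_symm (b : Bool) : (finTwoEquiv.symm b : ℕ) = b.toNat := by
  cases b <;> rfl

theorem bvalEquiv_apply {n : ℕ} (x : Fin n → Bool) : (bvalEquiv n x : ℕ) = bval x := by
  rw [bvalEquiv, Equiv.trans_apply, finFunctionFinEquiv_apply, bval]
  refine Fintype.sum_equiv Fin.revPerm _ _ fun i => ?_
  have : n - 1 - (n - (i + 1)) = i := by omega
  cases h : x i.rev <;> simp [Equiv.arrowCongr_apply, h, Fin.val_rev, this, val_finTwoEquiv_symm]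

theorem testBit_bval {n : ℕ} (x : Fin n → Bool) (j : Fin n) :
    (bval x).testBit (n - 1 - j) = x j := by
  set f := Equiv.arrowCongr Fin.revPerm finTwoEquiv.symm x
  have hdigit : (f j.rev : ℕ) = finFunctionFinEquiv f / 2 ^ (j.rev : ℕ) % 2 := by
    conv_lhs => rw [← finFunctionFinEquiv.symm_apply_apply f]
    rfl
  have hfj : f j.rev = finTwoEquiv.symm (x j) := by simp [f, Equiv.arrowCongr_apply]
  rw [hfj, Fin.val_rev, show n - (j + 1) = n - 1 - j by omega] at hdigit
  rw [← bvalEquiv_apply, Nat.testBit_eq_decide_div_mod_eq, bvalEquiv, Equiv.trans_apply, ← hdigit,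
    val_finTwoEquiv_symm]
  cases x j <;> rfl

theorem bval_injective (n : ℕ) : Function.Injective (bval (n := n)) := fun x y h =>
  (bvalEquiv n).injective (Fin.ext (by rwa [bvalEquiv_apply, bvalEquiv_apply]))

theorem mCount_initSeg {n a : ℕ} (ha : a ≤ 2 ^ n) (j : Fin n) :
    mCount (initSeg n a) j = #{m ∈ range a | m.testBit (n - 1 - j)} := by
  rw [mCount, initSeg, filter_filter]
  refine card_nbij bval (fun x hx => ?_) (bval_injective n).injOn (fun m hm => ?_)
  · obtain ⟨hxa, hxj⟩ : bval x < a ∧ x j := by simpa using hx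
    simpa [hxa, testBit_bval] using hxj
  · obtain ⟨hma, hmb⟩ : m < a ∧ m.testBit (n - 1 - j) := by simpa using hm
    set x := (bvalEquiv n).symm ⟨m, hma.trans_le ha⟩
    have hxm : bval x = m := by rw [← bvalEquiv_apply, Equiv.apply_symm_apply]
    refine ⟨x, ?_, hxm⟩
    simpa [hxm, hma, ← testBit_bval x j] using hmb

theorem stmt_8 (n a : ℕ) (hn : 0 < n) (ha : a ≤ 2 ^ n) :
    (∀ j : Fin n, mCount (initSeg n a) j ≤ mCount (initSeg n a) ⟨n - 1, by omega⟩) ∧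
    mCount (initSeg n a) ⟨n - 1, by omega⟩ = a / 2 := by
  have hlast : mCount (initSeg n a) ⟨n - 1, by omega⟩ = a / 2 := by
    rw [mCount_initSeg ha, Nat.sub_self, Nat.card_filter_range_testBit_zero]
  refine ⟨fun j => ?_, hlast⟩
  rw [hlast, mCount_initSeg ha]
  have := Nat.two_mul_card_filter_range_testBit_le a (n - 1 - j)
  omega
end

section
/- Let I_a ⊆ Q_n, let F_{j,k} ⊆ Q_n be a hyperface, and g ∈ Aut(Q_n) with a' = |g(I_a) ∩ F_{j,k}|. Then the induced subgraph on I_a ∩ g^{-1}(F_{j,k}) is isomorphic to the initial segment I_{a'}: concretely, there exists h ∈ Aut(Q_n) such that h(F_{0,0}) = g^{-1}(F_{j,k}) and h(I_{a'}) = I_a ∩ g^{-1}(F_{j,k}). -/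
/-! Automorphisms of `Q_n` preserve Hamming distance, and the hyperface `F_{j,k}` is the set of
points nearer to a vertex `u` with `u_j = k` than to its neighbour across coordinate `j`; hence
`g⁻¹(F_{j,k})` is again a hyperface `F_{j',k'}`. The automorphism
`x ↦ insertNth j' (k' xor x₀) (tail x)` maps `F_{0,0} = I_{2^{n-1}}` onto `F_{j',k'}` and is
strictly increasing in binary value there, so it carries `I_{a'}` onto a down-set of `F_{j',k'}`
of size `a'`. So is `I_a ∩ F_{j',k'}`, and two down-sets of a chain with the same size coincide. -/

open Finset Function

section Hamming

variable {n : ℕ}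

lemma hypercube_adj_iff {x y : Fin n → Bool} : (hypercube n).Adj x y ↔ hammingDist x y = 1 :=
  Iff.rfl

lemma hammingDist_le_length {x y : Fin n → Bool} (w : (hypercube n).Walk x y) :
    hammingDist x y ≤ w.length := by
  induction w with
  | nil => simp
  | @cons u v z huv _ ih =>
    rw [SimpleGraph.Walk.length_cons]
    have := hammingDist_triangle u v z
    rw [hypercube_adj_iff.mp huv] at this
    omega

lemma hammingDist_update_self_of_ne {ι β : Type*} [Fintype ι] [DecidableEq ι] [DecidableEq β]
    {x : ι → β} {i : ι} {b : β} (hb : x i ≠ b) : hammingDist x (update x i b) = 1 := by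
  rw [hammingDist, card_eq_one]
  refine ⟨i, ?_⟩
  ext t
  by_cases ht : t = i <;> simp [ht, hb]

lemma hammingDist_update_add_one {ι β : Type*} [Fintype ι] [DecidableEq ι] [DecidableEq β]
    {x y : ι → β} {i : ι} (hi : x i ≠ y i) :
    hammingDist (update x i (y i)) y + 1 = hammingDist x y := by
  have : ({t | update x i (y i) t ≠ y t} : Finset ι) = ({t | x t ≠ y t} : Finset ι).erase i := by
    ext t
    by_cases ht : t = i <;> simp [ht]
  rw [hammingDist, hammingDist, this, card_erase_add_one (by simpa using hi)]

lemma exists_walk_length_eq_hammingDist (x y : Fin n → Bool) :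
    ∃ w : (hypercube n).Walk x y, w.length = hammingDist x y := by
  induction hxy : hammingDist x y generalizing x with
  | zero =>
    obtain rfl := hammingDist_eq_zero.mp hxy
    exact ⟨.nil, rfl⟩
  | succ d ih =>
    obtain ⟨i, hi⟩ : ∃ i, x i ≠ y i := by
      by_contra! h
      simp [funext h] at hxy
    have hrest := hammingDist_update_add_one hi
    obtain ⟨w, hw⟩ := ih (update x i (y i)) (by omega)
    exact ⟨.cons (hypercube_adj_iff.mpr (hammingDist_update_self_of_ne hi)) w, by simp [hw]⟩

lemma hammingDist_apply_iso (g : hypercube n ≃g hypercube n) (x y : Fin n → Bool) :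
    hammingDist (g x) (g y) = hammingDist x y := by
  have hle : ∀ (g : hypercube n ≃g hypercube n) x y,
      hammingDist (g x) (g y) ≤ hammingDist x y := by
    intro g x y
    obtain ⟨w, hw⟩ := exists_walk_length_eq_hammingDist x y
    simpa [hw] using hammingDist_le_length (w.map g.toHom)
  refine le_antisymm (hle g x y) ?_
  simpa using hle g.symm (g x) (g y)

end Hamming

section Faces

lemma hammingDist_lt_hammingDist_update_not_iff {ι : Type*} [Fintype ι] [DecidableEq ι]
    (x u : ι → Bool) (j : ι) :
    hammingDist x u < hammingDist x (update u j (!u j)) ↔ x j = u j := by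
  have hsplit : ∀ v : ι → Bool, hammingDist x v =
      (if x j ≠ v j then 1 else 0) + ∑ i ∈ univ.erase j, if x i ≠ v i then 1 else 0 := by
    intro v
    rw [hammingDist, card_filter, ← add_sum_erase _ _ (mem_univ j)]
  have hrest : ∀ i ∈ univ.erase j, update u j (!u j) i = u i := fun i hi =>
    update_of_ne (ne_of_mem_erase hi) _ _
  have hsum : (∑ i ∈ univ.erase j, if x i ≠ update u j (!u j) i then 1 else 0) =
      ∑ i ∈ univ.erase j, if x i ≠ u i then 1 else 0 :=
    sum_congr rfl fun i hi => by rw [hrest i hi]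
  rw [hsplit u, hsplit (update u j (!u j)), hsum, update_self]
  cases x j <;> cases u j <;> simp

lemma exists_eq_update_not_of_hammingDist_eq_one {ι : Type*} [Fintype ι] [DecidableEq ι]
    {u v : ι → Bool} (h : hammingDist u v = 1) : ∃ j, v = update u j (!u j) := by
  obtain ⟨j, hj⟩ := card_eq_one.mp h
  have hdiff : ∀ i, u i ≠ v i ↔ i = j := fun i => by
    simpa using congrArg (i ∈ ·) hj
  refine ⟨j, funext fun i => ?_⟩
  by_cases hi : i = j
  · subst hi
    have := (hdiff i).mpr rfl
    cases hu : u i <;> simp_all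
  · rw [update_of_ne hi]
    exact (not_not.mp (mt (hdiff i).mp hi)).symm

variable {n : ℕ}

lemma mem_image_iso_iff {g : hypercube n ≃g hypercube n} {s : Finset (Fin n → Bool)}
    {y : Fin n → Bool} : y ∈ s.image g ↔ g.symm y ∈ s := by
  rw [mem_image]
  constructor
  · rintro ⟨x, hx, rfl⟩
    simpa using hx
  · exact fun hy => ⟨g.symm y, hy, g.apply_symm_apply y⟩

lemma exists_image_face_eq_face (g : hypercube n ≃g hypercube n) (j : Fin n) (k : Bool) :
    ∃ j' k', (face n j k).image g = face n j' k' := by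
  set u₀ : Fin n → Bool := fun _ => k
  have hface : ∀ x, x ∈ face n j k ↔
      hammingDist x u₀ < hammingDist x (update u₀ j (!u₀ j)) := fun x => by
    rw [hammingDist_lt_hammingDist_update_not_iff]
    simp [face, u₀]
  obtain ⟨j', hj'⟩ := exists_eq_update_not_of_hammingDist_eq_one
    ((hammingDist_apply_iso g u₀ (update u₀ j (!u₀ j))).trans
      (hammingDist_update_self_of_ne (Bool.not_ne_self _).symm))
  refine ⟨j', g u₀ j', ?_⟩
  ext y
  rw [mem_image_iso_iff, hface, ← hammingDist_apply_iso g, ← hammingDist_apply_iso g (g.symm y),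
    RelIso.apply_symm_apply, hj', hammingDist_lt_hammingDist_update_not_iff]
  simp [face]

end Faces

section BinaryValue

lemma bval_cons {m : ℕ} (b : Bool) (y : Fin m → Bool) :
    bval (Fin.cons b y : Fin (m + 1) → Bool) = (if b then 2 ^ m else 0) + bval y := by
  simp only [bval, Fin.sum_univ_succ, Fin.cons_zero, Fin.cons_succ, Fin.val_zero, Fin.val_succ]
  congr 2
  ext i
  congr 2
  omega

lemma bval_lt_two_pow {n : ℕ} (x : Fin n → Bool) : bval x < 2 ^ n := by
  induction n with
  | zero => simp [bval]
  | succ m ih =>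
    cases x using Fin.consCases with | cons b y =>
    have := ih y
    rw [bval_cons, pow_succ]
    split <;> omega

lemma bval_injective_s16 {n : ℕ} : Injective (bval : (Fin n → Bool) → ℕ) := by
  induction n with
  | zero => exact fun x y _ => Subsingleton.elim x y
  | succ m ih =>
    intro x y h
    cases x using Fin.consCases with | cons a x =>
    cases y using Fin.consCases with | cons b y =>
    have hx := bval_lt_two_pow x
    have hy := bval_lt_two_pow y
    rw [bval_cons, bval_cons] at h
    obtain rfl : a = b := by
      cases a <;> cases b <;> simp only [if_true, Bool.false_eq_true, if_false] at h <;>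
        first | rfl | omega
    rw [ih (by omega : bval x = bval y)]

lemma card_initSeg {n a : ℕ} (ha : a ≤ 2 ^ n) : #(initSeg n a) = a := by
  have himage : univ.image (bval : (Fin n → Bool) → ℕ) = range (2 ^ n) :=
    eq_of_subset_of_card_le (fun v hv => by
      obtain ⟨x, -, rfl⟩ := mem_image.mp hv
      exact mem_range.mpr (bval_lt_two_pow x))
      (by rw [card_image_of_injective _ bval_injective_s16]; simp)
  have hfilter : (initSeg n a).image bval = (range (2 ^ n)).filter (· < a) := by
    rw [← himage, filter_image, initSeg]
  rw [← card_image_of_injective _ bval_injective_s16, hfilter]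
  convert card_range a using 2
  ext v
  simp only [mem_filter, mem_range]
  omega

lemma initSeg_two_pow_eq_face_zero_false (m : ℕ) :
    initSeg (m + 1) (2 ^ m) = face (m + 1) 0 false := by
  ext x
  cases x using Fin.consCases with | cons b y =>
  have := bval_lt_two_pow y
  cases b <;> simp [initSeg, face, bval_cons, this]

lemma bval_insertNth_lt_bval_insertNth {m : ℕ} (p : Fin (m + 1)) (b : Bool)
    {y z : Fin m → Bool} (h : bval y < bval z) :
    bval (p.insertNth b y) < bval (p.insertNth b z) := by
  induction m with
  | zero => exact absurd h (by simp [bval])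
  | succ m ih =>
    cases p using Fin.cases with
    | zero => simpa [Fin.insertNth_zero', bval_cons] using h
    | succ p =>
      cases y using Fin.consCases with | cons c y =>
      cases z using Fin.consCases with | cons d z =>
      rw [Fin.insertNth_succ_cons, Fin.insertNth_succ_cons, bval_cons, bval_cons]
      rw [bval_cons, bval_cons] at h
      have := bval_lt_two_pow y
      have := bval_lt_two_pow z
      have := bval_lt_two_pow (p.insertNth b y)
      have := bval_lt_two_pow (p.insertNth b z)
      have hmono := ih p (y := y) (z := z)
      cases c <;> cases d <;> simp only [if_true, Bool.false_eq_true, if_false] at h ⊢ <;> omega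

end BinaryValue

section FaceShift

variable {m : ℕ}

lemma hammingDist_insertNth {α : Type*} [DecidableEq α] (p : Fin (m + 1)) (a b : α)
    (y z : Fin m → α) :
    hammingDist (Fin.insertNth (α := fun _ => α) p a y) (p.insertNth b z) =
      (if a ≠ b then 1 else 0) + hammingDist y z := by
  simp only [hammingDist, card_filter, Fin.sum_univ_succAbove _ p, Fin.insertNth_apply_same,
    Fin.insertNth_apply_succAbove]

lemma hammingDist_eq_ite_add_hammingDist_tail {α : Type*} [DecidableEq α]
    (x y : Fin (m + 1) → α) :
    hammingDist x y = (if x 0 ≠ y 0 then 1 else 0) + hammingDist (Fin.tail x) (Fin.tail y) := by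
  conv_lhs => rw [← Fin.cons_self_tail x, ← Fin.cons_self_tail y, ← Fin.insertNth_zero',
    ← Fin.insertNth_zero']
  exact hammingDist_insertNth 0 _ _ _ _

def faceShift (p : Fin (m + 1)) (k : Bool) : hypercube (m + 1) ≃g hypercube (m + 1) where
  toFun x := p.insertNth (xor k (x 0)) (Fin.tail x)
  invFun y := Fin.cons (xor k (y p)) (p.removeNth y)
  left_inv x := by simp [Fin.removeNth_insertNth]
  right_inv y := by simp
  map_rel_iff' {x y} := by
    simp only [Equiv.coe_fn_mk, hypercube_adj_iff, hammingDist_insertNth,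
      hammingDist_eq_ite_add_hammingDist_tail x y, ne_eq, Bool.bne_right_inj]

variable (p : Fin (m + 1)) (k : Bool)

lemma faceShift_cons_false (y : Fin m → Bool) :
    faceShift p k (Fin.cons false y) = p.insertNth k y := by
  simp [faceShift]

lemma image_faceShift_face_zero_false :
    (face (m + 1) 0 false).image (faceShift p k) = face (m + 1) p k := by
  ext y
  rw [mem_image_iso_iff]
  simp only [face, mem_filter, mem_univ, true_and]
  simp [faceShift, eq_comm (a := k)]

lemma bval_faceShift_lt_bval_faceShift {x y : Fin (m + 1) → Bool} (hx : x 0 = false)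
    (hy : y 0 = false) (h : bval x < bval y) :
    bval (faceShift p k x) < bval (faceShift p k y) := by
  cases x using Fin.consCases with | cons a x =>
  cases y using Fin.consCases with | cons b y =>
  simp only [Fin.cons_zero] at hx hy
  subst hx hy
  rw [bval_cons, bval_cons] at h
  rw [faceShift_cons_false, faceShift_cons_false]
  exact bval_insertNth_lt_bval_insertNth p k (by simpa using h)

end FaceShift

lemma Finset.eq_of_card_eq_of_lowerClosed {α β : Type*} [LinearOrder β] (f : α → β)
    {S T U : Finset α} (hSU : S ⊆ U) (hTU : T ⊆ U)
    (hS : ∀ y ∈ S, ∀ x ∈ U, f x ≤ f y → x ∈ S) (hT : ∀ y ∈ T, ∀ x ∈ U, f x ≤ f y → x ∈ T)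
    (hcard : #S = #T) : S = T := by
  have hsub : S ⊆ T ∨ T ⊆ S := by
    by_contra! h
    obtain ⟨s, hs, hsT⟩ := not_subset.mp h.1
    obtain ⟨t, ht, htS⟩ := not_subset.mp h.2
    rcases le_total (f t) (f s) with hts | hst
    · exact htS (hS s hs t (hTU ht) hts)
    · exact hsT (hT t ht s (hSU hs) hst)
  rcases hsub with h | h
  · exact eq_of_subset_of_card_le h hcard.ge
  · exact (eq_of_subset_of_card_le h hcard.le).symm

lemma card_image_inter_eq_card_inter_image_symm {α β : Type*} [DecidableEq α] [DecidableEq β]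
    (e : α ≃ β) (s : Finset α) (t : Finset β) : #(s.image e ∩ t) = #(s ∩ t.image e.symm) := by
  rw [← card_image_of_injective _ e.injective, image_inter _ _ e.injective, image_image]
  simp

lemma image_faceShift_initSeg {m : ℕ} (p : Fin (m + 1)) (k : Bool) (a : ℕ) :
    (initSeg (m + 1) #(initSeg (m + 1) a ∩ face (m + 1) p k)).image (faceShift p k) =
      initSeg (m + 1) a ∩ face (m + 1) p k := by
  set a' := #(initSeg (m + 1) a ∩ face (m + 1) p k)
  have hpow : 2 ^ m ≤ 2 ^ (m + 1) := Nat.pow_le_pow_right two_pos m.le_succ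
  have hface := image_faceShift_face_zero_false p k
  have ha' : a' ≤ 2 ^ m := by
    calc a' ≤ #(face (m + 1) p k) := card_le_card inter_subset_right
      _ = 2 ^ m := by
        rw [← hface, card_image_of_injective _ (faceShift p k).injective,
          ← initSeg_two_pow_eq_face_zero_false, card_initSeg hpow]
  have hsub : initSeg (m + 1) a' ⊆ face (m + 1) 0 false :=
    initSeg_two_pow_eq_face_zero_false m ▸ fun x hx => by
      simp only [initSeg, mem_filter, mem_univ, true_and] at hx ⊢
      omega
  refine eq_of_card_eq_of_lowerClosed bval (U := face (m + 1) p k)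
    (hface ▸ image_subset_image hsub) inter_subset_right ?_ ?_ ?_
  · intro y hy z hz hzy
    rw [mem_image_iso_iff] at hy ⊢
    rw [← hface, mem_image_iso_iff] at hz
    by_contra hz'
    have hlt : bval ((faceShift p k).symm y) < bval ((faceShift p k).symm z) := by
      simp only [initSeg, mem_filter, mem_univ, true_and, not_lt] at hy hz'
      omega
    have := bval_faceShift_lt_bval_faceShift p k (by simpa [face] using hsub hy)
      (by simpa [face] using hz) hlt
    simp only [RelIso.apply_symm_apply] at this
    omega
  · intro y hy z hz hzy
    simp only [mem_inter, initSeg, mem_filter, mem_univ, true_and] at hy ⊢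
    exact ⟨hzy.trans_lt hy.1, hz⟩
  · rw [card_image_of_injective _ (faceShift p k).injective, card_initSeg (ha'.trans hpow)]

theorem stmt_16_general (n a : ℕ) (hn : 0 < n) (j : Fin n) (k : Bool)
    (g : hypercube n ≃g hypercube n) :
    ∃ h : hypercube n ≃g hypercube n,
      (face n ⟨0, hn⟩ false).image h = (face n j k).image g.symm ∧
      (initSeg n (((initSeg n a).image g ∩ face n j k).card)).image h =
        initSeg n a ∩ (face n j k).image g.symm := by
  obtain ⟨m, rfl⟩ : ∃ m, n = m + 1 := ⟨n - 1, by omega⟩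
  obtain ⟨j', k', hface⟩ := exists_image_face_eq_face g.symm j k
  have hcard : #((initSeg (m + 1) a).image g ∩ face (m + 1) j k) =
      #(initSeg (m + 1) a ∩ face (m + 1) j' k') :=
    hface ▸ card_image_inter_eq_card_inter_image_symm g.toEquiv _ _
  rw [hcard, hface]
  exact ⟨faceShift j' k', image_faceShift_face_zero_false j' k', image_faceShift_initSeg j' k' a⟩

theorem stmt_16 (n a : ℕ) (hn : 0 < n) (ha : a ≤ 2 ^ n) (j : Fin n) (k : Bool)
    (g : hypercube n ≃g hypercube n) :
    ∃ h : hypercube n ≃g hypercube n,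
      (face n ⟨0, hn⟩ false).image h = (face n j k).image g.symm ∧
      (initSeg n (((initSeg n a).image g ∩ face n j k).card)).image h =
        initSeg n a ∩ (face n j k).image g.symm :=
  stmt_16_general n a hn j k g
end
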